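/- If A is an infinite-dimensional division algebra over a field k, then the finite dual coalgebra A° is zero. -/

import Mathlib

open TensorProduct

universe u

section MeasuringPreamble

variable {k : Type u} [CommRing k]

/-- The convolution product of two linear maps `C →ₗ[k] B` from a coalgebra `C` to an
algebra `B`: `f * g = μ_B ∘ (f ⊗ g) ∘ Δ_C`. -/
noncomputable def convMulL {C B : Type u} [AddCommGroup C] [Module k C] [Coalgebra k C]
    [Ring B] [Algebra k B] (f g : C →ₗ[k] B) : C →ₗ[k] B :=
  LinearMap.mul' k B ∘ₗ TensorProduct.map f g ∘ₗ Coalgebra.comul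

/-- The convolution unit `ι_B ∘ ε_C : C →ₗ[k] B`. -/
noncomputable def convOneL {C B : Type u} [AddCommGroup C] [Module k C] [Coalgebra k C]
    [Ring B] [Algebra k B] : C →ₗ[k] B :=
  Algebra.linearMap k B ∘ₗ Coalgebra.counit

/-- `φ : A →ₗ[k] Hom_k(C,B)` is a measuring, i.e. an algebra morphism from `A` to the
convolution algebra `Hom_k(C,B)`. -/
def IsMeasuring {A C B : Type u} [Ring A] [Algebra k A] [AddCommGroup C] [Module k C]
    [Coalgebra k C] [Ring B] [Algebra k B] (φ : A →ₗ[k] C →ₗ[k] B) : Prop :=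
  φ 1 = convOneL (k := k) ∧ ∀ a a' : A, φ (a * a') = convMulL (φ a) (φ a')

/-- Restriction of a measuring along a linear map `g : C →ₗ[k] C'`. -/
noncomputable def measRestrict {A C C' B : Type u} [Ring A] [Algebra k A]
    [AddCommGroup C] [Module k C] [AddCommGroup C'] [Module k C']
    [Ring B] [Algebra k B]
    (g : C →ₗ[k] C') (φ : A →ₗ[k] C' →ₗ[k] B) : A →ₗ[k] C →ₗ[k] B :=
  ((LinearMap.llcomp k C C' B).flip g).comp φ

/-- `(P, e)` is a universal measuring coalgebra for the algebras `A` and `B`: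
for every coalgebra `C`, measurings `A →ₗ[k] Hom_k(C,B)` (i.e. algebra morphisms into
the convolution algebra) are in bijection with coalgebra morphisms `C →ₗc[k] P`,
naturally in `C`. -/
structure IsUniversalMeasuring (A B P : Type u) [Ring A] [Algebra k A]
    [Ring B] [Algebra k B] [AddCommGroup P] [Module k P] [Coalgebra k P] where
  equiv : ∀ (C : Type u) [AddCommGroup C] [Module k C] [Coalgebra k C],
    {φ : A →ₗ[k] C →ₗ[k] B // IsMeasuring φ} ≃ (C →ₗc[k] P)
  naturality : ∀ (C C' : Type u) [AddCommGroup C] [Module k C] [Coalgebra k C]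
    [AddCommGroup C'] [Module k C'] [Coalgebra k C'] (g : C →ₗc[k] C')
    (φ : {φ : A →ₗ[k] C' →ₗ[k] B // IsMeasuring φ})
    (h : IsMeasuring (measRestrict g.toLinearMap φ.1)),
    equiv C ⟨measRestrict g.toLinearMap φ.1, h⟩ =
      (equiv C' φ).comp g

end MeasuringPreamble

lemma LinearMap.exists_ne_zero_apply_eq_zero_of_not_finiteDimensional {K V W : Type*} [Field K]
    [AddCommGroup V] [Module K V] [AddCommGroup W] [Module K W] [FiniteDimensional K W]
    (hV : ¬ FiniteDimensional K V) (f : V →ₗ[K] W) : ∃ v, v ≠ 0 ∧ f v = 0 := by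
  by_contra! h
  exact hV (Module.Finite.of_injective f ((injective_iff_map_eq_zero f).mpr
    fun v => not_imp_not.mp (h v)))

lemma convMulL_apply_eq_zero_of_repr {k C B : Type u} [CommRing k] [AddCommGroup C] [Module k C]
    [Coalgebra k C] [Ring B] [Algebra k B] (f g : C →ₗ[k] B) {x : C} {ι : Type*}
    (r : Coalgebra.Repr k x ι) (hg : ∀ i ∈ r.index, g (r.right i) = 0) :
    convMulL f g x = 0 := by
  rw [convMulL, LinearMap.comp_apply, LinearMap.comp_apply, ← r.eq, map_sum, map_sum]
  exact Finset.sum_eq_zero fun i hi => by simp [hg i hi]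

lemma Coalgebra.subsingleton_of_counit_eq_zero {R C : Type*} [CommSemiring R] [AddCommMonoid C]
    [Module R C] [Coalgebra R C] (h : Coalgebra.counit (R := R) (A := C) = 0) :
    Subsingleton C where
  allEq x y := by
    rw [← Coalgebra.sum_counit_smul (Coalgebra.Repr.arbitrary R x),
      ← Coalgebra.sum_counit_smul (Coalgebra.Repr.arbitrary R y)]
    simp [h]

namespace IsMeasuring

variable {k A C B : Type u} [Field k] [DivisionRing A] [Algebra k A] [AddCommGroup C]
  [Module k C] [Coalgebra k C] [Ring B] [Algebra k B] [FiniteDimensional k B]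
  {φ : A →ₗ[k] C →ₗ[k] B}

/-- Given `x`, choose `b ≠ 0` killing the right tensor factors of `Δ x` under `φ`;
then `φ 1 x = φ (b⁻¹ * b) x = ∑ φ b⁻¹ (x₍₁₎) * φ b (x₍₂₎) = 0`. -/
theorem apply_one_eq_zero (hA : ¬ FiniteDimensional k A) (hφ : IsMeasuring φ) : φ 1 = 0 := by
  ext x
  let r := Coalgebra.Repr.arbitrary k x
  let evalRight : A →ₗ[k] r.index → B :=
    LinearMap.pi fun i => LinearMap.applyₗ (R := k) (r.right i) ∘ₗ φ
  obtain ⟨b, hb, hφb⟩ :=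
    evalRight.exists_ne_zero_apply_eq_zero_of_not_finiteDimensional hA
  rw [← inv_mul_cancel₀ hb, hφ.2]
  exact convMulL_apply_eq_zero_of_repr _ _ r fun i hi => congrFun hφb ⟨i, hi⟩

theorem counit_eq_zero [Nontrivial B] (hA : ¬ FiniteDimensional k A) (hφ : IsMeasuring φ) :
    Coalgebra.counit (R := k) (A := C) = 0 := by
  have h := hφ.1.symm.trans (hφ.apply_one_eq_zero hA)
  ext x
  simpa [convOneL] using LinearMap.congr_fun h x

end IsMeasuring

/-- If `A` is an infinite-dimensional division algebra over a field `k`, then the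
finite dual coalgebra `A°` (the universal measuring coalgebra `P(A,k)`) is zero. -/
theorem finiteDual_of_infinite_dimensional_division_algebra_subsingleton
    {k : Type u} [Field k] {A : Type u} [DivisionRing A] [Algebra k A]
    (hinf : ¬ FiniteDimensional k A)
    (Adual : Type u) [AddCommGroup Adual] [Module k Adual] [Coalgebra k Adual]
    (hAdual : IsUniversalMeasuring (k := k) A k Adual) :
    Subsingleton Adual :=
  Coalgebra.subsingleton_of_counit_eq_zero
    (((hAdual.equiv Adual).symm (CoalgHom.id k Adual)).2.counit_eq_zero hinf)
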